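/- Let τ = (1+√5)/2 and let ‖x‖ denote the distance from a real number x to the nearest integer. If k is a positive integer satisfying f_{n−1} < k < f_n (so k is strictly between two consecutive Fibonacci numbers), then ‖τk‖ > 1/τ^{n−2}. -/

import Mathlib

/-- The two-letter alphabet. -/
inductive Letter : Type
  | a : Letter
  | b : Letter
deriving DecidableEq

/-- A word is a finite sequence of letters. -/
abbrev Word := List Letter

/-- Concatenation set `UV = {uv : u ∈ U, v ∈ V}`. -/
def concatSet (U V : Set Word) : Set Word := {w | ∃ u ∈ U, ∃ v ∈ V, w = u ++ v}

mutual
  /-- The sets `A_n` of inflated words (indexed so that `Aset 1 = {a}`). -/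
  def Aset : ℕ → Set Word
    | 0 => ∅
    | 1 => {[Letter.a]}
    | n + 2 => concatSet (Bset (n + 1)) (concatSet (Aset (n + 1)) (Aset (n + 1)))
  /-- The sets `B_n` of inflated words (indexed so that `Bset 1 = {b}`). -/
  def Bset : ℕ → Set Word
    | 0 => ∅
    | 1 => {[Letter.b]}
    | n + 2 => concatSet (Aset (n + 1)) (Bset (n + 1)) ∪ concatSet (Bset (n + 1)) (Aset (n + 1))
end

/-- The sub-word `w[a,b] = w_a w_{a+1} … w_b` (1-indexed). -/
def wordSlice (w : Word) (i j : ℕ) : Word := (w.drop (i - 1)).take (j - i + 1)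

/-- `W[a,b] = {w[a,b] : w ∈ W}`. -/
def setSlice (W : Set Word) (i j : ℕ) : Set Word := {x | ∃ w ∈ W, x = wordSlice w i j}

/-- `x` is a sub-word (contiguous factor) of `w`. -/
def IsFactor (x w : Word) : Prop := ∃ u v : Word, w = u ++ x ++ v

/-- `F(S, m)`: the set of all sub-words of length `m` of words in `S`. -/
def FactorSet (S : Set Word) (m : ℕ) : Set Word :=
  {x | x.length = m ∧ ∃ w ∈ S, IsFactor x w}

/-- `F(A, m) = ⋃_{n ≥ 1} F(A_n, m)`. -/
def FA (m : ℕ) : Set Word := ⋃ n ∈ {n : ℕ | 1 ≤ n}, FactorSet (Aset n) m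

/-- `F(B, m) = ⋃_{n ≥ 1} F(B_n, m)`. -/
def FB (m : ℕ) : Set Word := ⋃ n ∈ {n : ℕ | 1 ≤ n}, FactorSet (Bset n) m

/-- The golden mean `τ = (1 + √5)/2`. -/
noncomputable def tau : ℝ := (1 + Real.sqrt 5) / 2

/-! For integers `m, k` the product `(φk - m)(ψk - m) = m² - mk - k²` is a nonzero integer
(`φ` is irrational). By Fibonacci descent `(m, k) ↦ (k, m - k)` it is `±1` only for consecutive
Fibonacci numbers, and it is never `±2` modulo `5`. So for `k` not a Fibonacci number
`4 ≤ |φk - m| · |ψk - m| ≤ |φk - m| (|φk - m| + √5 k)`, while `√5 k < φⁿ` when `k < fₙ`;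
hence `|φk - m| ≤ φ^(2-n)` would give `4 ≤ 1 + φ² < 4`. -/

open Real goldenRatio

/-- The norm of `m - kφ` in `ℤ[φ]`. -/
def normGolden (m k : ℤ) : ℤ := m ^ 2 - m * k - k ^ 2

theorem normGolden_eq_mul (m k : ℤ) :
    (normGolden m k : ℝ) = (φ * k - m) * (ψ * k - m) := by
  rw [show (φ * k - m) * (ψ * k - m) = φ * ψ * k ^ 2 - (φ + ψ) * m * k + m ^ 2 by ring,
    goldenRatio_mul_goldenConj, goldenRatio_add_goldenConj, normGolden]
  push_cast; ring

theorem normGolden_ne_zero {m k : ℤ} (hk : k ≠ 0) : normGolden m k ≠ 0 := by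
  intro h
  have h0 := normGolden_eq_mul m k
  rw [h, Int.cast_zero, eq_comm, mul_eq_zero, sub_eq_zero, sub_eq_zero] at h0
  rcases h0 with h0 | h0
  · exact (goldenRatio_irrational.mul_intCast hk).ne_int m h0
  · exact (goldenConj_irrational.mul_intCast hk).ne_int m h0

theorem normGolden_cast_zmod_five_ne (m k : ℤ) :
    (normGolden m k : ZMod 5) ≠ 2 ∧ (normGolden m k : ZMod 5) ≠ 3 := by
  simp only [normGolden]; push_cast
  generalize (m : ZMod 5) = x; generalize (k : ZMod 5) = y
  revert x y; decide

theorem normGolden_sub_swap (m k : ℤ) : normGolden k (m - k) = -normGolden m k := by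
  simp only [normGolden]; ring

theorem exists_fib_eq_of_natAbs_normGolden_eq_one {m k : ℕ} (hm : 0 < m)
    (h : (normGolden m k).natAbs = 1) : ∃ j, k = Nat.fib j ∧ m = Nat.fib (j + 1) := by
  induction hs : m + k using Nat.strong_induction_on generalizing m k with
  | _ s ih =>
  rcases Nat.eq_zero_or_pos k with rfl | hk
  · refine ⟨0, rfl, ?_⟩
    have hm1 : m ^ 2 = 1 := by simpa [normGolden, Int.natAbs_pow] using h
    simpa using hm1
  · have hkm : k ≤ m := by
      by_contra! hmk
      have : (1 : ℤ) ≤ m * (k - m) := one_le_mul_of_one_le_of_one_le (by omega) (by omega)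
      rcases Int.natAbs_eq_iff.mp h with h | h <;>
        simp only [normGolden, Nat.cast_one] at h <;> nlinarith
    have h' : (normGolden k (m - k : ℕ)).natAbs = 1 := by
      rw [Nat.cast_sub hkm, normGolden_sub_swap, Int.natAbs_neg, h]
    obtain ⟨j, hj, hj'⟩ := ih m (by omega) hk h' (by omega)
    exact ⟨j + 1, hj', by rw [Nat.fib_add_two]; omega⟩

theorem four_le_abs_normGolden {m : ℤ} {k : ℕ} (hm : 0 < m) (hk : ∀ j, k ≠ Nat.fib j) :
    4 ≤ |normGolden m k| := by
  lift m to ℕ using hm.le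
  have h0 : normGolden m k ≠ 0 := normGolden_ne_zero (by exact_mod_cast hk 0)
  have h1 : (normGolden m k).natAbs ≠ 1 := fun h ↦
    let ⟨j, hj, _⟩ := exists_fib_eq_of_natAbs_normGolden_eq_one (by omega) h
    hk j hj
  have h23 : normGolden m k ≠ 2 ∧ normGolden m k ≠ -2 ∧ normGolden m k ≠ 3 ∧
      normGolden m k ≠ -3 := by
    obtain ⟨h2, h3⟩ := normGolden_cast_zmod_five_ne m k
    refine ⟨?_, ?_, ?_, ?_⟩ <;> intro h <;> rw [h] at h2 h3 <;> revert h2 h3 <;> decide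
  rw [Int.abs_eq_natAbs]
  omega

theorem ne_fib_of_fib_sub_one_lt_of_lt_fib {n k : ℕ} (h1 : Nat.fib (n - 1) < k)
    (h2 : k < Nat.fib n) (j : ℕ) : k ≠ Nat.fib j := by
  rintro rfl
  rcases Nat.lt_or_ge j n with hj | hj
  · exact (Nat.fib_mono (Nat.le_sub_one_of_lt hj)).not_gt h1
  · exact (Nat.fib_mono hj).not_gt h2

theorem abs_normGolden_le (m : ℤ) (k : ℕ) :
    |(normGolden m k : ℝ)| ≤ |φ * k - m| * (|φ * k - m| + √5 * k) := by
  rw [normGolden_eq_mul, abs_mul]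
  refine mul_le_mul_of_nonneg_left ?_ (abs_nonneg _)
  calc |ψ * k - m| = |(φ * k - m) - √5 * k| := by
        rw [← goldenRatio_sub_goldenConj]; ring_nf
    _ ≤ |φ * k - m| + √5 * k := by
        grw [abs_sub, abs_of_nonneg (by positivity : 0 ≤ √5 * k)]

theorem sqrt_five_mul_lt_goldenRatio_pow {k n : ℕ} (h : k < Nat.fib n) : √5 * k < φ ^ n := by
  have hk : (k : ℝ) + 1 ≤ Nat.fib n := by exact_mod_cast h
  have hψ : -1 ≤ ψ ^ n := by
    have hψ1 : |ψ| ≤ 1 :=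
      abs_le.mpr ⟨neg_one_lt_goldenConj.le, goldenConj_neg.le.trans zero_le_one⟩
    exact (abs_le.mp (abs_pow ψ n ▸ pow_le_one₀ (abs_nonneg ψ) hψ1)).1
  have hfib : √5 * Nat.fib n = φ ^ n - ψ ^ n := by
    rw [coe_fib_eq, mul_div_cancel₀ _ (by positivity)]
  have h5 : 1 < √5 := by rw [Real.lt_sqrt zero_le_one]; norm_num
  nlinarith

theorem one_div_zpow_sub_two {K : Type*} [DivisionRing K] {x : K} (hx : x ≠ 0) (n : ℕ) :
    1 / x ^ ((n : ℤ) - 2) = x ^ 2 / x ^ n := by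
  rw [one_div, ← zpow_neg, neg_sub, zpow_sub₀ hx, zpow_natCast, zpow_ofNat]

theorem dist_tau_mul_to_int (n k : ℕ) (hk : 0 < k)
    (h1 : Nat.fib (n - 1) < k) (h2 : k < Nat.fib n) (m : ℤ) :
    |tau * (k : ℝ) - (m : ℝ)| > 1 / tau ^ ((n : ℤ) - 2) := by
  have hn : 2 ≤ n := by
    by_contra! hn
    interval_cases n <;> simp_all
  have hk1 : 1 ≤ (k : ℝ) := by exact_mod_cast hk
  have hε1 : φ ^ 2 / φ ^ n ≤ 1 :=
    div_le_one_of_le₀ (pow_le_pow_right₀ one_lt_goldenRatio.le hn) (by positivity)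
  change |φ * k - m| > 1 / φ ^ ((n : ℤ) - 2)
  rw [one_div_zpow_sub_two goldenRatio_ne_zero, gt_iff_lt, ← not_le]
  intro hd
  have hd1 : |φ * k - m| ≤ 1 := hd.trans hε1
  have hm : 0 < m := by
    have : 1 < φ * k :=
      one_lt_goldenRatio.trans_le (le_mul_of_one_le_right goldenRatio_pos.le hk1)
    have : (0 : ℝ) < m := by linarith [(le_abs_self (φ * k - m)).trans hd1]
    exact_mod_cast this
  have hN : (4 : ℝ) ≤ |(normGolden m k : ℝ)| := by
    exact_mod_cast four_le_abs_normGolden hm (ne_fib_of_fib_sub_one_lt_of_lt_fib h1 h2)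
  have hdk : |φ * k - m| * (√5 * k) ≤ φ ^ 2 :=
    calc |φ * k - m| * (√5 * k) ≤ φ ^ 2 / φ ^ n * φ ^ n :=
          mul_le_mul hd (sqrt_five_mul_lt_goldenRatio_pow h2).le (by positivity) (by positivity)
      _ = φ ^ 2 := div_mul_cancel₀ _ (by positivity)
  nlinarith [abs_normGolden_le m k, abs_nonneg (φ * k - m), goldenRatio_sq, goldenRatio_lt_two]
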